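/- arXiv:2207.08221 — 3 statements merged into one kernel-verified Lean document; each statement's English description precedes it below -/
import Mathlib

section
/- Every matrix over a principal ideal ring admits a Smith normal form: for A ∈ M_{m×n}(S) with S a commutative principal ideal ring, there exist P ∈ GL_m(S) and Q ∈ GL_n(S) such that PAQ = diag(d_1, d_2, ...) with each d_i dividing d_{i+1}. -/
set_option linter.unusedSectionVars false

namespace SNFPIR

section RingTheory
variable {S : Type*} [CommRing S]

/-- Coset avoidance: given finitely many pairwise incomparable primes not containing `e`,
we can shift `x` by a multiple of `e` to avoid all of them. -/
lemma coset_avoid (e x : S) (F : Finset (Ideal S))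
    (hprime : ∀ P ∈ F, P.IsPrime)
    (hincomp : ∀ P ∈ F, ∀ Q ∈ F, P ≠ Q → ¬ (P ≤ Q))
    (he : ∀ P ∈ F, e ∉ P) :
    ∃ u : S, ∀ P ∈ F, x + u * e ∉ P := by
  classical
  induction F using Finset.induction with
  | empty => exact ⟨0, by simp⟩
  | @insert P F hPF ih =>
    obtain ⟨u, hu⟩ := ih (fun Q hQ => hprime Q (Finset.mem_insert_of_mem hQ))
      (fun Q hQ Q' hQ' hne => hincomp Q (Finset.mem_insert_of_mem hQ) Q'
        (Finset.mem_insert_of_mem hQ') hne)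
      (fun Q hQ => he Q (Finset.mem_insert_of_mem hQ))
    have hPprime : P.IsPrime := hprime P (Finset.mem_insert_self P F)
    by_cases hc : x + u * e ∈ P
    · -- pick s ∈ ∩ F, s ∉ P
      have hsel : ∀ Q ∈ F, ∃ s, s ∈ Q ∧ s ∉ P := by
        intro Q hQ
        have hne : Q ≠ P := by rintro rfl; exact hPF hQ
        have := hincomp Q (Finset.mem_insert_of_mem hQ) P (Finset.mem_insert_self P F) hne
        exact Set.not_subset.mp this
      choose sfun hs1 hs2 using hsel
      set s := ∏ Q ∈ F.attach, sfun Q.1 Q.2 with hsdef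
      have hsmem : ∀ Q ∈ F, s ∈ Q := by
        intro Q hQ
        have : sfun Q hQ ∣ s := Finset.dvd_prod_of_mem _ (Finset.mem_attach F ⟨Q, hQ⟩)
        obtain ⟨c, hc'⟩ := this
        rw [hc']
        exact Ideal.mul_mem_right _ _ (hs1 Q hQ)
      have hsP : s ∉ P := by
        intro hmem
        rw [hsdef] at hmem
        obtain ⟨Q, -, hQmem⟩ := Ideal.IsPrime.prod_mem_iff.mp hmem
        exact hs2 Q.1 Q.2 hQmem
      refine ⟨u + s, ?_⟩
      intro Q hQ
      rcases Finset.mem_insert.mp hQ with rfl | hQF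
      · intro hmem
        have : s * e ∈ Q := by
          have : x + (u + s) * e - (x + u * e) = s * e := by ring
          rw [← this]; exact Ideal.sub_mem _ hmem hc
        rcases hPprime.mem_or_mem this with h | h
        · exact hsP h
        · exact he Q (Finset.mem_insert_self _ _) h
      · intro hmem
        apply hu Q hQF
        have : x + (u + s) * e - s * e = x + u * e := by ring
        rw [← this]
        exact Ideal.sub_mem _ hmem (Ideal.mul_mem_right _ _ (hsmem Q hQF))
    · refine ⟨u, ?_⟩
      intro Q hQ
      rcases Finset.mem_insert.mp hQ with rfl | hQF
      · exact hc
      · exact hu Q hQF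

variable [IsPrincipalIdealRing S]

/-- In a principal ideal ring, a prime strictly below another prime is a minimal prime. -/
lemma minimal_of_lt_prime {Q M : Ideal S} (hQ : Q.IsPrime) (hM : M.IsPrime) (hlt : Q < M) :
    Q ∈ minimalPrimes S := by
  obtain ⟨P, hPmin, hPQ⟩ := Ideal.exists_minimalPrimes_le (bot_le (a := Q))
  have hPprime : P.IsPrime := hPmin.1.1
  by_cases hPQeq : P = Q
  · rwa [← hPQeq]
  exfalso
  -- work in S ⧸ P, a PID
  have hdom : IsDomain (S ⧸ P) := Ideal.Quotient.isDomain P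
  have hpir : IsPrincipalIdealRing (S ⧸ P) :=
    IsPrincipalIdealRing.of_surjective (Ideal.Quotient.mk P) Ideal.Quotient.mk_surjective
  set f := Ideal.Quotient.mk P
  have hker : RingHom.ker f = P := Ideal.mk_ker
  have hsurj : Function.Surjective f := Ideal.Quotient.mk_surjective
  have hcomapQ : Ideal.comap f (Q.map f) = Q := by
    rw [Ideal.comap_map_of_surjective _ hsurj, ← RingHom.ker_eq_comap_bot, hker,
      sup_eq_left.mpr hPQ]
  have hcomapM : Ideal.comap f (M.map f) = M := by
    rw [Ideal.comap_map_of_surjective _ hsurj, ← RingHom.ker_eq_comap_bot, hker,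
      sup_eq_left.mpr (hPQ.trans hlt.le)]
  have hQprime' : (Q.map f).IsPrime :=
    Ideal.map_isPrime_of_surjective hsurj (by rw [hker]; exact hPQ)
  have hQne : Q.map f ≠ ⊥ := by
    intro hbot
    apply hPQeq
    apply le_antisymm hPQ
    rw [← hcomapQ, hbot, ← RingHom.ker_eq_comap_bot, hker]
  have hQmax : (Q.map f).IsMaximal := IsPrime.to_maximal_ideal hQne
  have hMne : M.map f ≠ ⊤ := by
    intro htop
    have : M = ⊤ := by rw [← hcomapM, htop, Ideal.comap_top]
    exact hM.ne_top this
  have : Q.map f = M.map f := hQmax.eq_of_le hMne (Ideal.map_mono hlt.le)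
  have : Q = M := by rw [← hcomapQ, this, hcomapM]
  exact hlt.ne this

end RingTheory

section Stable
variable {S : Type*} [CommRing S] [IsPrincipalIdealRing S]

/-- Stable range style lemma for principal ideal rings. -/
lemma stable_range_pir (x y e : S) (h : ∃ p q f, p * x + q * y + f * e = 1) :
    ∃ u v α β : S, α * (x + u * e) + β * (y + v * e) = 1 := by
  classical
  obtain ⟨p, q, f, hpqf⟩ := h
  -- Step 1: choose u so that x + u*e avoids all minimal primes of S not containing e
  have hfin1 : (minimalPrimes S).Finite := minimalPrimes.finite_of_isNoetherianRing S
  set F1 : Finset (Ideal S) := hfin1.toFinset.filter (fun P => e ∉ P) with hF1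
  have hF1mem : ∀ P, P ∈ F1 ↔ P ∈ minimalPrimes S ∧ e ∉ P := by
    intro P; simp [hF1, Set.Finite.mem_toFinset]
  obtain ⟨u, hu⟩ := coset_avoid e x F1
    (fun P hP => ((hF1mem P).mp hP).1.1.1)
    (fun P hP Q hQ hne hle => hne (le_antisymm hle
      (((hF1mem Q).mp hQ).1.2 ⟨((hF1mem P).mp hP).1.1.1, bot_le⟩ hle)))
    (fun P hP => ((hF1mem P).mp hP).2)
  set c := x + u * e with hc
  -- Step 2: maximal ideals containing c but not e are minimal primes over (c), hence finite
  have hkey : ∀ M : Ideal S, M.IsMaximal → c ∈ M → e ∉ M → M ∈ (Ideal.span {c}).minimalPrimes := by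
    intro M hMmax hcM heM
    obtain ⟨Q, hQmin, hQM⟩ := Ideal.exists_minimalPrimes_le
      (J := M) (by rwa [Ideal.span_singleton_le_iff_mem])
    have hQprime : Q.IsPrime := hQmin.1.1
    rcases eq_or_lt_of_le hQM with rfl | hQMlt
    · exact hQmin
    · exfalso
      have hQminS : Q ∈ minimalPrimes S := minimal_of_lt_prime hQprime hMmax.isPrime hQMlt
      by_cases heQ : e ∈ Q
      · exact heM (hQM heQ)
      · exact hu Q ((hF1mem Q).mpr ⟨hQminS, heQ⟩)
          (hQmin.1.2 (Ideal.mem_span_singleton_self c))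
  have hfin2 : {M : Ideal S | M.IsMaximal ∧ c ∈ M ∧ e ∉ M}.Finite := by
    have : (Ideal.span {c}).minimalPrimes.Finite := by
      rw [Ideal.minimalPrimes_eq_comap]
      exact Set.Finite.image _ (minimalPrimes.finite_of_isNoetherianRing _)
    exact this.subset (fun M hM => hkey M hM.1 hM.2.1 hM.2.2)
  set F2 : Finset (Ideal S) := hfin2.toFinset with hF2
  have hF2mem : ∀ M, M ∈ F2 ↔ M.IsMaximal ∧ c ∈ M ∧ e ∉ M := by
    intro M; simp [hF2, Set.Finite.mem_toFinset]
  obtain ⟨v, hv⟩ := coset_avoid e y F2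
    (fun M hM => ((hF2mem M).mp hM).1.isPrime)
    (fun M hM Q hQ hne hle =>
      hne (((hF2mem M).mp hM).1.eq_of_le ((hF2mem Q).mp hQ).1.ne_top hle))
    (fun M hM => ((hF2mem M).mp hM).2.2)
  -- Step 3: conclude
  have htop : Ideal.span {c, y + v * e} = ⊤ := by
    by_contra hne
    obtain ⟨M, hMmax, hle⟩ := Ideal.exists_le_maximal _ hne
    have hcM : c ∈ M := hle (Ideal.subset_span (by simp))
    have hyM : y + v * e ∈ M := hle (Ideal.subset_span (by simp))
    by_cases heM : e ∈ M
    · have hxM : x ∈ M := by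
        have : x = c - u * e := by rw [hc]; ring
        rw [this]; exact Ideal.sub_mem _ hcM (Ideal.mul_mem_left _ _ heM)
      have hyM' : y ∈ M := by
        have : y = (y + v * e) - v * e := by ring
        rw [this]; exact Ideal.sub_mem _ hyM (Ideal.mul_mem_left _ _ heM)
      have : (1 : S) ∈ M := by
        rw [← hpqf]
        exact Ideal.add_mem _ (Ideal.add_mem _ (Ideal.mul_mem_left _ _ hxM)
          (Ideal.mul_mem_left _ _ hyM')) (Ideal.mul_mem_left _ _ heM)
      exact hMmax.ne_top (Ideal.eq_top_of_isUnit_mem _ this isUnit_one)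
    · exact hv M ((hF2mem M).mpr ⟨hMmax, hcM, heM⟩) hyM
  obtain ⟨α, β, hαβ⟩ := Ideal.mem_span_pair.mp (htop ▸ Submodule.mem_top : (1:S) ∈ Ideal.span {c, y + v * e})
  exact ⟨u, v, α, β, by rw [← hc]; exact hαβ⟩

/-- Key lemma: any pair (a,b) can be reduced by an SL₂ transformation to (g, *) with g ∣ a, g ∣ b. -/
lemma pair_reduce (a b : S) :
    ∃ x y z w : S, x * w - y * z = 1 ∧ (x * a + y * b) ∣ a ∧ (x * a + y * b) ∣ b := by
  classical
  set I := Ideal.span {a, b} with hI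
  obtain ⟨d, hd0⟩ : I.IsPrincipal := IsPrincipalIdealRing.principal I
  have hd : I = Ideal.span {d} := hd0
  have haI : a ∈ I := Ideal.subset_span (by simp)
  have hbI : b ∈ I := Ideal.subset_span (by simp)
  have hdI : d ∈ I := by rw [hd]; exact Ideal.mem_span_singleton_self d
  obtain ⟨a', ha'⟩ : ∃ a', a' * d = a := Ideal.mem_span_singleton'.mp (hd ▸ haI)
  obtain ⟨b', hb'⟩ : ∃ b', b' * d = b := Ideal.mem_span_singleton'.mp (hd ▸ hbI)
  obtain ⟨p, q, hpq⟩ : ∃ p q, p * a + q * b = d := Ideal.mem_span_pair.mp hdI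
  -- annihilator of d is principal
  set J : Ideal S := LinearMap.ker (LinearMap.toSpanSingleton S S d) with hJ
  obtain ⟨e, he0⟩ : J.IsPrincipal := IsPrincipalIdealRing.principal J
  have he : J = Ideal.span {e} := he0
  have hJmem : ∀ r : S, r ∈ J ↔ r * d = 0 := by
    intro r
    simp [hJ, LinearMap.mem_ker, LinearMap.toSpanSingleton_apply, smul_eq_mul]
  have hed : e * d = 0 := (hJmem e).mp (by rw [he]; exact Ideal.mem_span_singleton_self e)
  have hann : (1 - (p * a' + q * b')) ∈ J := by
    rw [hJmem]
    have : (1 - (p * a' + q * b')) * d = d - (p * (a' * d) + q * (b' * d)) := by ring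
    rw [this, ha', hb', hpq, sub_self]
  obtain ⟨f, hf⟩ : ∃ f, f * e = 1 - (p * a' + q * b') :=
    Ideal.mem_span_singleton'.mp (he ▸ hann)
  obtain ⟨u, v, α, β, hcomb⟩ := stable_range_pir a' b' e ⟨p, q, f, by linear_combination hf⟩
  refine ⟨α, β, -(b' + v * e), a' + u * e, by linear_combination hcomb, ?_, ?_⟩
  · -- α * a + β * b = d since e*d = 0
    have hg : α * a + β * b = d := by
      have : α * a + β * b = (α * (a' + u * e) + β * (b' + v * e)) * d
          - (α * u + β * v) * (e * d) := by
        rw [← ha', ← hb']; ring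
      rw [this, hcomb, hed]; ring
    rw [hg]; exact ⟨a', by rw [← ha']; ring⟩
  · have hg : α * a + β * b = d := by
      have : α * a + β * b = (α * (a' + u * e) + β * (b' + v * e)) * d
          - (α * u + β * v) * (e * d) := by
        rw [← ha', ← hb']; ring
      rw [this, hcomb, hed]; ring
    rw [hg]; exact ⟨b', by rw [← hb']; ring⟩

end Stable

section MatrixOps
variable {S : Type*} [CommRing S] {N : Type*} [DecidableEq N] [Fintype N]

/-- Matrix acting on rows/columns `i`, `j` as the 2×2 matrix `[[x,y],[z,w]]`, identity elsewhere. -/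
def mixM (i j : N) (x y z w : S) : Matrix N N S :=
  Matrix.of fun a b =>
    if a = i then (if b = i then x else if b = j then y else 0)
    else if a = j then (if b = i then z else if b = j then w else 0)
    else if a = b then 1 else 0

lemma sum_pair_support {i j : N} (hij : i ≠ j) (f : N → S)
    (hf : ∀ c, c ≠ i → c ≠ j → f c = 0) : ∑ c, f c = f i + f j := by
  classical
  rw [← Finset.sum_pair hij]
  exact (Finset.sum_subset (Finset.subset_univ _)
    (fun c _ hc => by
      simp only [Finset.mem_insert, Finset.mem_singleton, not_or] at hc
      exact hf c hc.1 hc.2)).symm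

lemma mix_mul_apply {i j : N} (hij : i ≠ j) (x y z w : S) {M' : Type*} [Fintype M']
    (B : Matrix N M' S) (a : N) (r : M') :
    (mixM i j x y z w * B) a r =
      if a = i then x * B i r + y * B j r
      else if a = j then z * B i r + w * B j r
      else B a r := by
  have hji : ¬ j = i := fun h => hij h.symm
  rw [Matrix.mul_apply]
  by_cases hai : a = i
  · subst hai
    rw [sum_pair_support hij _ (fun c hci hcj => by simp [mixM, hci, hcj])]
    simp [mixM, hij, hji]
  by_cases haj : a = j
  · subst haj
    rw [sum_pair_support hij _ (fun c hci hcj => by simp [mixM, hai, hci, hcj])]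
    simp [mixM, hji, hai]
  · rw [Finset.sum_eq_single_of_mem a (Finset.mem_univ a)
      (fun c _ hc => by simp [mixM, hai, haj, (Ne.symm hc : ¬ a = c)])]
    simp [mixM, hai, haj]

lemma mul_mixT_apply {i j : N} (hij : i ≠ j) (x y z w : S) {M' : Type*} [Fintype M']
    (B : Matrix M' N S) (r : M') (k : N) :
    (B * (mixM i j x y z w).transpose) r k =
      if k = i then x * B r i + y * B r j
      else if k = j then z * B r i + w * B r j
      else B r k := by
  have hji : ¬ j = i := fun h => hij h.symm
  rw [Matrix.mul_apply]
  simp only [Matrix.transpose_apply]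
  by_cases hki : k = i
  · subst hki
    rw [sum_pair_support hij _ (fun c hci hcj => by simp [mixM, hci, hcj])]
    simp [mixM, hij, hji]; ring
  by_cases hkj : k = j
  · subst hkj
    rw [sum_pair_support hij _ (fun c hci hcj => by simp [mixM, hci, hcj, hki])]
    simp [mixM, hji, hki]; ring
  · rw [Finset.sum_eq_single_of_mem k (Finset.mem_univ k)
      (fun c _ hc => by simp [mixM, hki, hkj, hc, (Ne.symm hc : ¬ k = c)])]
    simp [mixM, hki, hkj]

lemma mix_mul_mix {i j : N} (hij : i ≠ j) (x y z w : S) (hdet : x * w - y * z = 1) :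
    mixM i j x y z w * mixM i j w (-y) (-z) x = 1 := by
  have hji : ¬ j = i := fun h => hij h.symm
  ext a b
  rw [mix_mul_apply hij]
  simp only [mixM, Matrix.of_apply, Matrix.one_apply]
  by_cases hai : a = i <;> by_cases haj : a = j <;>
    by_cases hbi : b = i <;> by_cases hbj : b = j <;>
    simp_all [eq_comm] <;>
    try (first
      | rfl
      | linear_combination hdet
      | linear_combination -hdet)
  all_goals ring_nf

/-- The unit given by a mix matrix with `SL₂` data. -/
def mixUnit (i j : N) (x y z w : S) (hij : i ≠ j) (hdet : x * w - y * z = 1) :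
    (Matrix N N S)ˣ where
  val := mixM i j x y z w
  inv := mixM i j w (-y) (-z) x
  val_inv := mix_mul_mix hij x y z w hdet
  inv_val := by
    have := mix_mul_mix hij w (-y) (-z) x (by linear_combination hdet)
    simpa using this

lemma mixUnit_val (i j : N) (x y z w : S) (hij : i ≠ j) (hdet : x * w - y * z = 1) :
    (mixUnit i j x y z w hij hdet).val = mixM i j x y z w := rfl

/-- Transpose of a unit matrix, as a unit. -/
def transposeUnit (U : (Matrix N N S)ˣ) : (Matrix N N S)ˣ where
  val := U.1.transpose
  inv := (U⁻¹).1.transpose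
  val_inv := by rw [← Matrix.transpose_mul, Units.inv_mul, Matrix.transpose_one]
  inv_val := by rw [← Matrix.transpose_mul, Units.mul_inv, Matrix.transpose_one]

lemma transposeUnit_val (U : (Matrix N N S)ˣ) : (transposeUnit U).val = U.1.transpose := rfl

/-- Shear matrix: identity plus a row supported at row `i₀`. -/
def shearM (i₀ : N) (v : N → S) : Matrix N N S :=
  1 + Matrix.of (fun a b => if a = i₀ then v b else 0)

lemma shear_mul_shear (i₀ : N) (v v' : N → S) (hv : v i₀ = 0) :
    shearM i₀ v * shearM i₀ v' = shearM i₀ (v + v') := by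
  have hN : (Matrix.of (fun a b => if a = i₀ then v b else 0) *
      Matrix.of (fun a b => if a = i₀ then v' b else 0) : Matrix N N S) = 0 := by
    ext a b
    rw [Matrix.mul_apply]
    apply Finset.sum_eq_zero
    intro c _
    by_cases hai : a = i₀ <;> by_cases hci : c = i₀ <;> simp [hai, hci, hv]
  simp only [shearM, Matrix.mul_add, Matrix.add_mul, Matrix.one_mul, Matrix.mul_one, hN]
  ext a b
  by_cases hai : a = i₀ <;> simp [Matrix.add_apply, Pi.add_apply, hai]
  all_goals try ring

lemma shearM_zero (i₀ : N) : shearM i₀ (0 : N → S) = 1 := by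
  ext a b
  simp [shearM, Matrix.add_apply]

def shearUnit (i₀ : N) (v : N → S) (hv : v i₀ = 0) : (Matrix N N S)ˣ where
  val := shearM i₀ v
  inv := shearM i₀ (-v)
  val_inv := by
    rw [shear_mul_shear i₀ v (-v) hv]
    have : v + -v = 0 := by simp
    rw [this, shearM_zero]
  inv_val := by
    rw [shear_mul_shear i₀ (-v) v (by simp [hv])]
    have : -v + v = 0 := by simp
    rw [this, shearM_zero]

lemma shearUnit_val (i₀ : N) (v : N → S) (hv : v i₀ = 0) :
    (shearUnit i₀ v hv).val = shearM i₀ v := rfl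

lemma mul_shear_apply (i₀ : N) (v : N → S) {M' : Type*} [Fintype M'] (B : Matrix M' N S)
    (r : M') (k : N) :
    (B * shearM i₀ v) r k = B r k + B r i₀ * v k := by
  rw [Matrix.mul_apply]
  simp only [shearM, Matrix.add_apply, Matrix.one_apply, Matrix.of_apply]
  rw [Finset.sum_congr rfl (fun c _ => by rw [mul_add])]
  rw [Finset.sum_add_distrib]
  congr 1
  · rw [Finset.sum_eq_single_of_mem k (Finset.mem_univ k) (fun c _ hc => by
      simp [hc, (Ne.symm hc : ¬ k = c)])]
    simp
  · rw [Finset.sum_eq_single_of_mem i₀ (Finset.mem_univ i₀) (fun c _ hc => by simp [hc])]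
    simp

lemma shearT_mul_apply (i₀ : N) (u : N → S) {M' : Type*} [Fintype M'] (B : Matrix N M' S)
    (a : N) (r : M') :
    ((shearM i₀ u).transpose * B) a r = B a r + u a * B i₀ r := by
  rw [Matrix.mul_apply]
  simp only [shearM, Matrix.transpose_apply, Matrix.add_apply, Matrix.one_apply, Matrix.of_apply]
  rw [Finset.sum_congr rfl (fun c _ => by rw [add_mul])]
  rw [Finset.sum_add_distrib]
  congr 1
  · rw [Finset.sum_eq_single_of_mem a (Finset.mem_univ a) (fun c _ hc => by
      simp [hc, (Ne.symm hc : ¬ a = c)])]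
    simp
  · rw [Finset.sum_eq_single_of_mem i₀ (Finset.mem_univ i₀) (fun c _ hc => by simp [hc])]
    simp

end MatrixOps



section Reduce
variable {S : Type*} [CommRing S] [IsPrincipalIdealRing S] {m n : ℕ}

/-- `B` can be reduced to a form where the pivot divides everything and clears its row/column. -/
def Red (B : Matrix (Fin (m+1)) (Fin (n+1)) S) : Prop :=
  ∃ (P : (Matrix (Fin (m+1)) (Fin (m+1)) S)ˣ) (Q : (Matrix (Fin (n+1)) (Fin (n+1)) S)ˣ),
    (∀ i j, (P.1 * B * Q.1) 0 0 ∣ (P.1 * B * Q.1) i j) ∧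
    (∀ j, j ≠ 0 → (P.1 * B * Q.1) 0 j = 0) ∧
    (∀ i, i ≠ 0 → (P.1 * B * Q.1) i 0 = 0)

lemma red_conj (B : Matrix (Fin (m+1)) (Fin (n+1)) S)
    (U : (Matrix (Fin (m+1)) (Fin (m+1)) S)ˣ) (V : (Matrix (Fin (n+1)) (Fin (n+1)) S)ˣ)
    (h : Red (U.1 * B * V.1)) : Red B := by
  obtain ⟨P, Q, h1, h2, h3⟩ := h
  refine ⟨P * U, V * Q, ?_, ?_, ?_⟩ <;>
    · have hXY : (P * U).1 * B * (V * Q).1 = P.1 * (U.1 * B * V.1) * Q.1 := by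
        simp [Units.val_mul, Matrix.mul_assoc]
      rw [hXY]
      assumption

lemma span_lt_of_dvd {b t g : S} (h1 : g ∣ b) (h2 : g ∣ t) (h3 : ¬ b ∣ t) :
    Ideal.span {b} < Ideal.span {g} := by
  rw [lt_iff_le_not_ge]
  constructor
  · exact Ideal.span_singleton_le_span_singleton.mpr h1
  · intro hle
    exact h3 (dvd_trans (Ideal.span_singleton_le_span_singleton.mp hle) h2)

lemma reduce_pivot (B : Matrix (Fin (m+1)) (Fin (n+1)) S) : Red B := by
  classical
  have wf : WellFounded ((· > ·) : Ideal S → Ideal S → Prop) := isNoetherian_iff.mp inferInstance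
  suffices H : ∀ I : Ideal S, ∀ B : Matrix (Fin (m+1)) (Fin (n+1)) S,
      Ideal.span {B 0 0} = I → Red B from H _ B rfl
  intro I
  refine wf.induction (C := fun J => ∀ B : Matrix (Fin (m+1)) (Fin (n+1)) S,
    Ideal.span {B 0 0} = J → Red B) I ?_
  intro J IH B hBJ
  by_cases hA : ∃ jj, ¬ B 0 0 ∣ B 0 jj
  · obtain ⟨jj, hjj⟩ := hA
    have hjj0 : (0 : Fin (n+1)) ≠ jj := by rintro rfl; exact hjj dvd_rfl
    obtain ⟨x, y, z, w, hdet, hga, hgb⟩ := pair_reduce (B 0 0) (B 0 jj)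
    set V := transposeUnit (mixUnit 0 jj x y z w hjj0 hdet) with hV
    set B' := B * V.1 with hB'
    have h00 : B' 0 0 = x * B 0 0 + y * B 0 jj := by
      rw [hB', hV, transposeUnit_val, mixUnit_val, mul_mixT_apply hjj0]
      simp
    have hlt : J < Ideal.span {B' 0 0} := by
      rw [← hBJ, h00]
      exact span_lt_of_dvd hga hgb hjj
    exact red_conj B 1 V (by simpa using IH _ hlt B' rfl)
  push_neg at hA
  by_cases hB : ∃ ii, ¬ B 0 0 ∣ B ii 0
  · obtain ⟨ii, hii⟩ := hB
    have hii0 : (0 : Fin (m+1)) ≠ ii := by rintro rfl; exact hii dvd_rfl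
    obtain ⟨x, y, z, w, hdet, hga, hgb⟩ := pair_reduce (B 0 0) (B ii 0)
    set U := mixUnit 0 ii x y z w hii0 hdet with hU
    set B' := U.1 * B with hB'
    have h00 : B' 0 0 = x * B 0 0 + y * B ii 0 := by
      rw [hB', hU, mixUnit_val, mix_mul_apply hii0]
      simp
    have hlt : J < Ideal.span {B' 0 0} := by
      rw [← hBJ, h00]
      exact span_lt_of_dvd hga hgb hii
    exact red_conj B U 1 (by simpa using IH _ hlt B' rfl)
  push_neg at hB
  -- clear first row and column
  choose qf hq using fun j => hA j
  choose pf hp using fun i => hB i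
  set v : Fin (n+1) → S := fun k => if k = 0 then 0 else -(qf k) with hv
  set u : Fin (m+1) → S := fun i => if i = 0 then 0 else -(pf i) with hu
  set U := transposeUnit (shearUnit (0 : Fin (m+1)) u (by simp [hu])) with hUdef
  set V := shearUnit (0 : Fin (n+1)) v (by simp [hv]) with hVdef
  set C := U.1 * B * V.1 with hC
  have hCapp : ∀ r k, C r k = (B r k + u r * B 0 k) + (B r 0 + u r * B 0 0) * v k := by
    intro r k
    rw [hC, hUdef, hVdef, transposeUnit_val, shearUnit_val, shearUnit_val, mul_shear_apply,
      shearT_mul_apply, shearT_mul_apply]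
  have hC00 : C 0 0 = B 0 0 := by rw [hCapp]; simp [hu, hv]
  have hCrow : ∀ j : Fin (n+1), j ≠ 0 → C 0 j = 0 := by
    intro j hj
    rw [hCapp]
    simp only [hu, hv, if_pos rfl, if_neg hj]
    rw [hq j]
    ring
  have hCcol : ∀ i : Fin (m+1), i ≠ 0 → C i 0 = 0 := by
    intro i hi
    rw [hCapp]
    simp only [hu, hv, if_pos rfl, if_neg hi]
    rw [hp i]
    ring
  by_cases hall : ∀ i j, C 0 0 ∣ C i j
  · exact ⟨U, V, hall, hCrow, hCcol⟩
  push_neg at hall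
  obtain ⟨i, j, hnd⟩ := hall
  have hi0 : i ≠ 0 := by
    rintro rfl
    by_cases hj0 : j = 0
    · exact hnd (hj0 ▸ dvd_rfl)
    · exact hnd (hCrow j hj0 ▸ dvd_zero _)
  have hj0 : j ≠ 0 := by
    rintro rfl
    exact hnd (hCcol i hi0 ▸ dvd_zero _)
  -- add row i to row 0, then mix columns 0 and j
  set U2 := mixUnit (0 : Fin (m+1)) i (1:S) 1 0 1 (Ne.symm hi0) (by norm_num) with hU2
  set E := U2.1 * C with hE
  have hErow : ∀ r, E 0 r = C 0 r + C i r := by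
    intro r
    rw [hE, hU2, mixUnit_val, mix_mul_apply (Ne.symm hi0)]
    simp
  have hE00 : E 0 0 = B 0 0 := by rw [hErow, hCcol i hi0, hC00, add_zero]
  have hE0j : E 0 j = C i j := by rw [hErow, hCrow j hj0, zero_add]
  obtain ⟨x, y, z, w, hdet, hga, hgb⟩ := pair_reduce (E 0 0) (E 0 j)
  set V2 := transposeUnit (mixUnit (0 : Fin (n+1)) j x y z w (Ne.symm hj0) hdet) with hV2
  set F := E * V2.1 with hF
  have hF00 : F 0 0 = x * E 0 0 + y * E 0 j := by
    rw [hF, hV2, transposeUnit_val, mixUnit_val, mul_mixT_apply (Ne.symm hj0)]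
    simp
  have hlt : J < Ideal.span {F 0 0} := by
    rw [← hBJ, hF00]
    refine span_lt_of_dvd (t := C i j) ?_ ?_ ?_
    · rw [← hE00]; exact hga
    · rw [← hE0j]; exact hgb
    · rw [← hC00]; exact hnd
  have hRedF : Red F := IH _ hlt F rfl
  have hFeq : F = (U2 * U).1 * B * (V * V2).1 := by
    rw [hF, hE, hC]
    simp [Units.val_mul, Matrix.mul_assoc]
  exact red_conj B (U2 * U) (V * V2) (hFeq ▸ hRedF)

end Reduce

section Embed
variable {S : Type*} [CommRing S]

def embedM {a b : ℕ} (M : Matrix (Fin a) (Fin b) S) : Matrix (Fin (a+1)) (Fin (b+1)) S :=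
  Matrix.of fun i j =>
    Fin.cases (Fin.cases (1:S) (fun _ => 0) j) (fun i' => Fin.cases 0 (fun j' => M i' j') j) i

@[simp] lemma embedM_zero_zero {a b : ℕ} (M : Matrix (Fin a) (Fin b) S) :
    embedM M 0 0 = 1 := rfl
@[simp] lemma embedM_zero_succ {a b : ℕ} (M : Matrix (Fin a) (Fin b) S) (j : Fin b) :
    embedM M 0 j.succ = 0 := by simp [embedM]
@[simp] lemma embedM_succ_zero {a b : ℕ} (M : Matrix (Fin a) (Fin b) S) (i : Fin a) :
    embedM M i.succ 0 = 0 := by simp [embedM]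
@[simp] lemma embedM_succ_succ {a b : ℕ} (M : Matrix (Fin a) (Fin b) S) (i : Fin a) (j : Fin b) :
    embedM M i.succ j.succ = M i j := by simp [embedM]

lemma embedM_mul {a b c : ℕ} (M : Matrix (Fin a) (Fin b) S) (N : Matrix (Fin b) (Fin c) S) :
    embedM M * embedM N = embedM (M * N) := by
  ext i j
  rw [Matrix.mul_apply, Fin.sum_univ_succ]
  induction i using Fin.cases with
  | zero =>
    induction j using Fin.cases with
    | zero => simp
    | succ j => simp
  | succ i =>
    induction j using Fin.cases with
    | zero => simp
    | succ j => simp [Matrix.mul_apply]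

lemma embedM_one {a : ℕ} : embedM (1 : Matrix (Fin a) (Fin a) S) = 1 := by
  ext i j
  induction i using Fin.cases with
  | zero =>
    induction j using Fin.cases with
    | zero => simp
    | succ j => simp [Matrix.one_apply, (Fin.succ_ne_zero j).symm]
  | succ i =>
    induction j using Fin.cases with
    | zero => simp [Matrix.one_apply, Fin.succ_ne_zero i]
    | succ j => simp [Matrix.one_apply, Fin.succ_inj]

def embedUnit {a : ℕ} (U : (Matrix (Fin a) (Fin a) S)ˣ) : (Matrix (Fin (a+1)) (Fin (a+1)) S)ˣ where
  val := embedM U.1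
  inv := embedM (↑U⁻¹)
  val_inv := by rw [embedM_mul, Units.mul_inv, embedM_one]
  inv_val := by rw [embedM_mul, Units.inv_mul, embedM_one]

@[simp] lemma embedUnit_val {a : ℕ} (U : (Matrix (Fin a) (Fin a) S)ˣ) :
    (embedUnit U).val = embedM U.1 := rfl

lemma embedM_mul_left_zero {a n : ℕ} (M : Matrix (Fin a) (Fin a) S)
    (C : Matrix (Fin (a+1)) (Fin n) S) (k : Fin n) :
    (embedM M * C) 0 k = C 0 k := by
  rw [Matrix.mul_apply, Fin.sum_univ_succ]; simp

lemma embedM_mul_left_succ {a n : ℕ} (M : Matrix (Fin a) (Fin a) S)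
    (C : Matrix (Fin (a+1)) (Fin n) S) (r : Fin a) (k : Fin n) :
    (embedM M * C) r.succ k = ∑ c, M r c * C c.succ k := by
  rw [Matrix.mul_apply, Fin.sum_univ_succ]; simp

lemma mul_embedM_right_zero {b n : ℕ} (N : Matrix (Fin b) (Fin b) S)
    (C : Matrix (Fin n) (Fin (b+1)) S) (r : Fin n) :
    (C * embedM N) r 0 = C r 0 := by
  rw [Matrix.mul_apply, Fin.sum_univ_succ]; simp

lemma mul_embedM_right_succ {b n : ℕ} (N : Matrix (Fin b) (Fin b) S)
    (C : Matrix (Fin n) (Fin (b+1)) S) (r : Fin n) (k : Fin b) :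
    (C * embedM N) r k.succ = ∑ c, C r c.succ * N c k := by
  rw [Matrix.mul_apply, Fin.sum_univ_succ]; simp

lemma dvd_mul_matrix {g : S} {m n m' n' : Type*} [Fintype m] [Fintype n]
    (A : Matrix m n S) (hA : ∀ i j, g ∣ A i j)
    (M : Matrix m' m S) (N : Matrix n n' S) : ∀ i j, g ∣ (M * A * N) i j := by
  intro i j
  rw [Matrix.mul_apply]
  refine Finset.dvd_sum (fun k _ => ?_)
  rw [Matrix.mul_apply]
  rw [Finset.sum_mul]
  refine Finset.dvd_sum (fun c _ => ?_)
  exact ((hA c k).mul_left _).mul_right _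

end Embed

theorem snf_aux {S : Type*} [CommRing S] [IsPrincipalIdealRing S] :
    ∀ (m n : ℕ) (A : Matrix (Fin m) (Fin n) S),
    ∃ (P : (Matrix (Fin m) (Fin m) S)ˣ) (Q : (Matrix (Fin n) (Fin n) S)ˣ) (d : ℕ → S),
      (∀ i, d i ∣ d (i+1)) ∧ (∀ e : S, (∀ i j, e ∣ A i j) → e ∣ d 0) ∧
      (∀ i j, (P.1 * A * Q.1) i j = if (i:ℕ) = (j:ℕ) then d (i:ℕ) else 0) := by
  intro m
  induction m with
  | zero =>
    intro n A
    exact ⟨1, 1, 0, fun i => dvd_rfl, fun e _ => dvd_zero e, fun i j => i.elim0⟩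
  | succ m ih =>
    intro n A
    match n with
    | 0 => exact ⟨1, 1, 0, fun i => dvd_rfl, fun e _ => dvd_zero e, fun i j => j.elim0⟩
    | Nat.succ n =>
      obtain ⟨P₁, Q₁, hdiv, hrow, hcol⟩ := reduce_pivot A
      set C := P₁.1 * A * Q₁.1 with hC
      set A' : Matrix (Fin m) (Fin n) S := Matrix.of (fun i j => C i.succ j.succ) with hA'
      obtain ⟨P', Q', d', hchain', hd0', hdiag'⟩ := ih n A'
      set P := embedUnit P' * P₁ with hP
      set Q := Q₁ * embedUnit Q' with hQ
      have hF : P.1 * A * Q.1 = embedM P'.1 * C * embedM Q'.1 := by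
        rw [hP, hQ, hC]
        simp only [Units.val_mul, embedUnit_val, Matrix.mul_assoc]
      set d : ℕ → S := fun k => match k with | 0 => C 0 0 | (k+1) => d' k with hd
      have hgA' : ∀ (i : Fin m) (j : Fin n), C 0 0 ∣ A' i j := fun i j => hdiv i.succ j.succ
      have hgd0 : C 0 0 ∣ d' 0 := hd0' (C 0 0) hgA'
      refine ⟨P, Q, d, ?_, ?_, ?_⟩
      · intro k
        match k with
        | 0 => exact hgd0
        | Nat.succ k => exact hchain' k
      · intro e he
        exact dvd_mul_matrix A he P₁.1 Q₁.1 0 0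
      · intro i j
        rw [hF]
        induction i using Fin.cases with
        | zero =>
          induction j using Fin.cases with
          | zero =>
            rw [mul_embedM_right_zero, embedM_mul_left_zero]
            simp [hd]
          | succ j =>
            rw [mul_embedM_right_succ]
            have : ∀ c, (embedM P'.1 * C) 0 c.succ * Q'.1 c j = 0 := by
              intro c
              rw [embedM_mul_left_zero, hrow c.succ (Fin.succ_ne_zero c), zero_mul]
            rw [Finset.sum_congr rfl (fun c _ => this c), Finset.sum_const_zero]
            have : ((0 : Fin (m+1)) : ℕ) ≠ ((j.succ : Fin (n+1)) : ℕ) := by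
              simp [Fin.val_succ]
            rw [if_neg this]
        | succ i =>
          induction j using Fin.cases with
          | zero =>
            rw [mul_embedM_right_zero, embedM_mul_left_succ]
            have : ∀ c, P'.1 i c * C c.succ 0 = 0 := by
              intro c
              rw [hcol c.succ (Fin.succ_ne_zero c), mul_zero]
            rw [Finset.sum_congr rfl (fun c _ => this c), Finset.sum_const_zero]
            have : ((i.succ : Fin (m+1)) : ℕ) ≠ ((0 : Fin (n+1)) : ℕ) := by
              simp [Fin.val_succ]
            rw [if_neg this]
          | succ j =>
            rw [mul_embedM_right_succ]
            have hsum : ∀ c, (embedM P'.1 * C) i.succ c.succ * Q'.1 c j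
                = (∑ e, P'.1 i e * A' e c) * Q'.1 c j := by
              intro c
              rw [embedM_mul_left_succ]
              congr 1
            rw [Finset.sum_congr rfl (fun c _ => hsum c)]
            have : ∑ c, (∑ e, P'.1 i e * A' e c) * Q'.1 c j = (P'.1 * A' * Q'.1) i j := by
              rw [Matrix.mul_apply]
              exact Finset.sum_congr rfl (fun c _ => by rw [Matrix.mul_apply])
            rw [this, hdiag' i j]
            simp only [Fin.val_succ]
            by_cases hij : (i : ℕ) = (j : ℕ)
            · rw [if_pos hij, if_pos (by omega), hd]
            · rw [if_neg hij, if_neg (by omega)]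


end SNFPIR

/-- Every matrix over a commutative principal ideal ring admits a Smith normal form:
there are invertible matrices `P`, `Q` such that `P * A * Q` is diagonal with each
diagonal entry dividing the next. -/
theorem smith_normal_form_principal_ideal_ring
    (S : Type*) [CommRing S] [IsPrincipalIdealRing S]
    (m n : ℕ) (A : Matrix (Fin m) (Fin n) S) :
    ∃ (P : (Matrix (Fin m) (Fin m) S)ˣ) (Q : (Matrix (Fin n) (Fin n) S)ˣ) (d : ℕ → S),
      (∀ i, d i ∣ d (i + 1)) ∧
      ∀ (i : Fin m) (j : Fin n),
        (P.val * A * Q.val) i j = if (i : ℕ) = (j : ℕ) then d (i : ℕ) else 0 := by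
  obtain ⟨P, Q, d, h1, _, h3⟩ := SNFPIR.snf_aux m n A
  exact ⟨P, Q, d, h1, h3⟩
end

section
/- Let R be a finite chain ring with uniformizer π and nilpotency index r. For any A ∈ M_{n×2n}(R), there exists a unique tuple (n_1, ..., n_r) of nonnegative integers with n_1 + ... + n_r ≤ n such that A = U · D_{(n_1,...,n_r)} · V for some U ∈ GL_n(R) and V ∈ GL_{2n}(R), where D_{(n_1,...,n_r)} is the n×2n diagonal matrix with n_1 entries equal to π^{r-1}, then n_2 entries equal to π^{r-2}, ..., then n_r entries equal to 1, and zeros elsewhere. -/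
/-- The list of diagonal entries `π^(r-1)` (`ν 0` times), `π^(r-2)` (`ν 1` times), ...,
`π^0 = 1` (`ν (r-1)` times). -/
def smithDiagEntries {R : Type*} [CommRing R] (π : R) (r : ℕ) (ν : Fin r → ℕ) : List R :=
  (List.ofFn fun i : Fin r => List.replicate (ν i) (π ^ (r - 1 - (i : ℕ)))).flatten

/-- The `n × 2n` diagonal matrix `D_{(n_1,…,n_r)}` with `ν 0` entries `π^(r-1)`,
`ν 1` entries `π^(r-2)`, ..., `ν (r-1)` entries `1`, and zeros elsewhere. -/
def smithDiag {R : Type*} [CommRing R] (π : R) (r n : ℕ) (ν : Fin r → ℕ) :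
    Matrix (Fin n) (Fin (2 * n)) R :=
  Matrix.of fun i j =>
    if (i : ℕ) = (j : ℕ) then (smithDiagEntries π r ν).getD (i : ℕ) 0 else 0

/-!
Every element of a finite chain ring is a unit times a power of `π`, so an entry of a matrix with
the least exponent divides all the others. Using it as a pivot, row and column operations split off
a `1 × 1` block, and induction makes every matrix equivalent to a rectangular diagonal matrix with
entries `π ^ eᵢ`; permuting rows and columns sorts the exponents into the order of
`D_{(n_1,…,n_r)}`, where `n_j` counts the `eᵢ = r - j`.

For uniqueness, the number of row vectors `w` with `w ⬝ (π ^ k • A) = 0` is invariant under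
equivalence. For a diagonal matrix with exponents `eᵢ` it is `q ^ ∑ᵢ min (k + eᵢ) r`, where
`q ≥ 2` is the number of elements killed by `π`, and these sums for all `k` determine how many
`eᵢ` equal each `t < r`.
-/

namespace Matrix

section

variable {m n R : Type*} [Fintype m] [DecidableEq m] [Fintype n] [DecidableEq n] [CommRing R]

def Equivalent (A B : Matrix m n R) : Prop :=
  ∃ (U : (Matrix m m R)ˣ) (V : (Matrix n n R)ˣ), A = U.val * B * V.val

namespace Equivalent

variable {A B C : Matrix m n R}

theorem refl (A : Matrix m n R) : Equivalent A A := ⟨1, 1, by simp⟩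

theorem of_eq (h : A = B) : Equivalent A B := h ▸ refl A

theorem of_isUnit {U : Matrix m m R} {V : Matrix n n R} (hU : IsUnit U) (hV : IsUnit V)
    (h : A = U * B * V) : Equivalent A B :=
  ⟨hU.unit, hV.unit, h⟩

theorem symm : Equivalent A B → Equivalent B A := by
  rintro ⟨U, V, rfl⟩
  exact ⟨U⁻¹, V⁻¹, by simp [Matrix.mul_assoc]⟩

theorem trans : Equivalent A B → Equivalent B C → Equivalent A C := by
  rintro ⟨U, V, rfl⟩ ⟨U', V', rfl⟩
  exact ⟨U * U', V' * V, by simp [Matrix.mul_assoc]⟩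

theorem smul (c : R) : Equivalent A B → Equivalent (c • A) (c • B) := by
  rintro ⟨U, V, rfl⟩
  exact ⟨U, V, by rw [Matrix.mul_smul, Matrix.smul_mul]⟩

theorem card_vecMul_eq_zero (h : Equivalent A B) :
    Nat.card {w : m → R // w ᵥ* A = 0} = Nat.card {w : m → R // w ᵥ* B = 0} := by
  obtain ⟨U, V, rfl⟩ := h
  have hV : ∀ x : n → R, x ᵥ* V.val = 0 ↔ x = 0 := fun x =>
    ⟨fun hx => by simpa using congrArg (· ᵥ* V⁻¹.val) hx, fun hx => by simp [hx]⟩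
  refine Nat.card_congr (Equiv.subtypeEquiv
    { toFun := (· ᵥ* U.val), invFun := (· ᵥ* U⁻¹.val),
      left_inv := fun w => by simp, right_inv := fun w => by simp } fun w => ?_)
  simp only [Equiv.coe_fn_mk]
  rw [← vecMul_vecMul, ← vecMul_vecMul, hV]

end Equivalent

theorem equivalent_submatrix (A : Matrix m n R) (e : m ≃ m) (f : n ≃ n) :
    Equivalent (A.submatrix e f) A := by
  refine .of_isUnit (U := (1 : Matrix m m R).submatrix e (Equiv.refl m))
    (V := (1 : Matrix n n R).submatrix (Equiv.refl n) f)
    (.of_mul_eq_one ((1 : Matrix m m R).submatrix e.symm (Equiv.refl m)) ?_)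
    (.of_mul_eq_one ((1 : Matrix n n R).submatrix (Equiv.refl n) f.symm) ?_) ?_
  · rw [one_submatrix_mul]; ext i j; simp [one_apply]
  · rw [mul_submatrix_one]; ext i j; simp [one_apply]
  · rw [one_submatrix_mul, mul_submatrix_one]; rfl

theorem isUnit_one_sub_vecMulVec {x y : m → R} (h : y ⬝ᵥ x = 0) : IsUnit (1 - vecMulVec x y) :=
  IsNilpotent.isUnit_one_sub ⟨2, by rw [sq, vecMulVec_mul_vecMulVec, h, zero_smul, vecMulVec_zero]⟩

end

section

variable {R : Type*} [CommRing R] {m n : ℕ}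

def cornerBlock (x : R) (M : Matrix (Fin m) (Fin n) R) : Matrix (Fin (m + 1)) (Fin (n + 1)) R :=
  of fun i j => Fin.cases (Fin.cases x 0 j) (fun i' => Fin.cases 0 (M i') j) i

section cornerBlock

variable (x : R) (M : Matrix (Fin m) (Fin n) R) (i : Fin m) (j : Fin n)

@[simp] theorem cornerBlock_zero_zero : cornerBlock x M 0 0 = x := rfl
@[simp] theorem cornerBlock_zero_succ : cornerBlock x M 0 j.succ = 0 := rfl
@[simp] theorem cornerBlock_succ_zero : cornerBlock x M i.succ 0 = 0 := rfl
@[simp] theorem cornerBlock_succ_succ : cornerBlock x M i.succ j.succ = M i j := rfl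

end cornerBlock

theorem cornerBlock_mul {l : ℕ} (x y : R) (M : Matrix (Fin m) (Fin n) R)
    (N : Matrix (Fin n) (Fin l) R) :
    cornerBlock x M * cornerBlock y N = cornerBlock (x * y) (M * N) := by
  ext i j
  rw [mul_apply, Fin.sum_univ_succ]
  induction i using Fin.cases <;> induction j using Fin.cases <;> simp [mul_apply]

theorem cornerBlock_one_one : cornerBlock (1 : R) (1 : Matrix (Fin m) (Fin m) R) = 1 := by
  ext i j
  induction i using Fin.cases <;> induction j using Fin.cases <;>
    simp [one_apply, (Fin.succ_ne_zero _).symm]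

theorem isUnit_cornerBlock {x : R} {M : Matrix (Fin m) (Fin m) R} (hx : IsUnit x)
    (hM : IsUnit M) : IsUnit (cornerBlock x M) := by
  obtain ⟨u, rfl⟩ := hx
  obtain ⟨U, rfl⟩ := hM
  exact .of_mul_eq_one (cornerBlock ↑u⁻¹ ↑U⁻¹) (by simp [cornerBlock_mul, cornerBlock_one_one])

theorem Equivalent.cornerBlock {x y : R} {M N : Matrix (Fin m) (Fin n) R} (hxy : Associated x y)
    (hMN : Equivalent M N) : Equivalent (cornerBlock x M) (cornerBlock y N) := by
  obtain ⟨u, rfl⟩ := hxy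
  obtain ⟨U, V, rfl⟩ := hMN
  refine .of_isUnit (isUnit_cornerBlock u⁻¹.isUnit U.isUnit)
    (isUnit_cornerBlock isUnit_one V.isUnit) ?_
  simp [cornerBlock_mul, mul_left_comm]

theorem equivalent_cornerBlock_of_dvd (B : Matrix (Fin (m + 1)) (Fin (n + 1)) R)
    (hcol : ∀ i, B 0 0 ∣ B i 0) (hrow : ∀ j, B 0 0 ∣ B 0 j) :
    ∃ M : Matrix (Fin m) (Fin n) R, Equivalent B (cornerBlock (B 0 0) M) := by
  choose a ha using hcol
  choose b hb using hrow
  set a' : Fin (m + 1) → R := Fin.cons 0 fun i => a i.succ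
  set b' : Fin (n + 1) → R := Fin.cons 0 fun j => b j.succ
  -- `P` and `Q` subtract multiples of row `0` and of column `0`; `a' 0 = b' 0 = 0` makes them
  -- unipotent.
  set P : Matrix (Fin (m + 1)) (Fin (m + 1)) R := 1 - vecMulVec a' (Pi.single 0 1)
  set Q : Matrix (Fin (n + 1)) (Fin (n + 1)) R := 1 - vecMulVec (Pi.single 0 1) b'
  have hPBQ : P * B * Q =
      B - vecMulVec a' (B.row 0) - vecMulVec ((B - vecMulVec a' (B.row 0)).col 0) b' := by
    simp only [P, Q, Matrix.sub_mul, Matrix.one_mul, vecMulVec_mul, single_one_vecMul,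
      Matrix.mul_sub, Matrix.mul_one, mul_vecMulVec, mulVec_single_one]
  have hP : IsUnit P := isUnit_one_sub_vecMulVec (by simp [a'])
  have hQ : IsUnit Q := isUnit_one_sub_vecMulVec (by simp [b'])
  refine ⟨(P * B * Q).submatrix Fin.succ Fin.succ, .symm (.of_isUnit hP hQ ?_)⟩
  ext i j
  rw [hPBQ]
  induction i using Fin.cases <;> induction j using Fin.cases
  case zero.succ j => simp [a', b', vecMulVec_apply, hb j.succ]
  case succ.zero i => simp [a', b', vecMulVec_apply, ha i.succ, mul_comm]
  all_goals simp [a', b', vecMulVec_apply]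

def rectDiagonal (d : Fin m → R) : Matrix (Fin m) (Fin n) R :=
  of fun i j => if (i : ℕ) = j then d i else 0

theorem cornerBlock_rectDiagonal (x : R) (d : Fin m → R) :
    cornerBlock x (rectDiagonal d : Matrix (Fin m) (Fin n) R) = rectDiagonal (Fin.cons x d) := by
  ext i j
  induction i using Fin.cases <;> induction j using Fin.cases <;> simp [rectDiagonal]

theorem smul_rectDiagonal (c : R) (d : Fin m → R) :
    c • (rectDiagonal d : Matrix (Fin m) (Fin n) R) = rectDiagonal (c • d) := by
  ext i j
  simp [rectDiagonal]

theorem vecMul_rectDiagonal_eq_zero_iff (h : m ≤ n) (d : Fin m → R) (w : Fin m → R) :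
    w ᵥ* (rectDiagonal d : Matrix (Fin m) (Fin n) R) = 0 ↔ ∀ i, w i * d i = 0 := by
  refine ⟨fun hw i => ?_, fun hw => ?_⟩
  · simpa [vecMul, dotProduct, rectDiagonal, Fin.val_inj] using congrFun hw (Fin.castLE h i)
  · ext j
    simp only [vecMul, dotProduct, Pi.zero_apply]
    exact Finset.sum_eq_zero fun i _ => by simp [rectDiagonal, hw]

theorem rectDiagonal_comp_perm_equivalent (h : m ≤ n) (d : Fin m → R) (σ : Equiv.Perm (Fin m)) :
    Equivalent (rectDiagonal (d ∘ σ)) (rectDiagonal d : Matrix (Fin m) (Fin n) R) := by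
  set τ := σ.viaFintypeEmbedding (Fin.castLEEmb h)
  refine .trans (.of_eq ?_) (equivalent_submatrix _ σ τ)
  ext i j
  by_cases hj : j ∈ Set.range (Fin.castLEEmb h)
  · obtain ⟨j, rfl⟩ := hj
    have hτ : τ (Fin.castLE h j) = Fin.castLE h (σ j) :=
      Equiv.Perm.viaFintypeEmbedding_apply_image _ _ j
    simp [rectDiagonal, hτ, Fin.val_inj]
  · have hτ : τ j = j := Equiv.Perm.viaFintypeEmbedding_apply_notMem_range _ _ hj
    rw [Set.mem_range, not_exists] at hj
    have hi : ¬ (i : ℕ) = j := fun hij => hj i (Fin.ext hij)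
    have hσi : ¬ ((σ i : Fin m) : ℕ) = j := fun hij => hj (σ i) (Fin.ext hij)
    simp [rectDiagonal, hτ, hi, hσi]

end

end Matrix

theorem Equiv.Perm.exists_comp_eq_of_map_univ_eq {ι α : Type*} [Fintype ι]
    {f g : ι → α} (h : Finset.univ.val.map f = Finset.univ.val.map g) :
    ∃ σ : Equiv.Perm ι, ∀ i, f (σ i) = g i := by
  classical
  have hcard : ∀ a, Fintype.card {i // g i = a} = Fintype.card {i // f i = a} := fun a => by
    simpa [Fintype.card_subtype, Finset.card_def, Multiset.count_map, eq_comm] using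
      congrArg (Multiset.count a) h.symm
  exact ⟨Equiv.ofFiberEquiv fun a => Fintype.equivOfCardEq (hcard a), Equiv.ofFiberEquiv_map _⟩

theorem List.map_univ_getD {α : Type*} (l : List α) (d : α) {n : ℕ} (h : l.length ≤ n) :
    Finset.univ.val.map (fun i : Fin n => l.getD i d) =
      ↑l + Multiset.replicate (n - l.length) d := by
  rw [Fin.univ_val_map, ← Multiset.coe_replicate, Multiset.coe_add]
  congr 1
  refine List.ext_getElem (by simp; omega) fun i h₁ h₂ => ?_
  simp only [List.getElem_ofFn, List.getElem_append, List.getElem_replicate]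
  split_ifs with hi
  · exact List.getD_eq_getElem _ _ hi
  · exact List.getD_eq_default _ _ (by omega)

section SmithExponents

open Finset

variable {r : ℕ} (ν : Fin r → ℕ)

-- Positions past the end of the list are the zero entries `0 = π ^ r` of `smithDiag`.
def smithExponents (r : ℕ) (ν : Fin r → ℕ) : List ℕ :=
  (List.ofFn fun j : Fin r => List.replicate (ν j) (r - 1 - j)).flatten

theorem smithDiagEntries_eq_map {R : Type*} [CommRing R] (π : R) :
    smithDiagEntries π r ν = (smithExponents r ν).map (π ^ ·) := by
  simp [smithDiagEntries, smithExponents, List.map_flatten, List.map_ofFn, Function.comp_def]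

theorem length_smithExponents : (smithExponents r ν).length = ∑ j, ν j := by
  simp [smithExponents, List.sum_ofFn]

theorem lt_of_mem_smithExponents {t : ℕ} (ht : t ∈ smithExponents r ν) : t < r := by
  simp only [smithExponents, List.mem_flatten, List.mem_ofFn] at ht
  obtain ⟨_, ⟨j, rfl⟩, ht⟩ := ht
  rw [List.mem_replicate] at ht
  omega

theorem count_smithExponents (j : Fin r) : (smithExponents r ν).count (r - 1 - j) = ν j := by
  have key : ∀ x : Fin r, r - 1 - (x : ℕ) = r - 1 - j ↔ x = j := fun x => by
    rw [Fin.ext_iff]; omega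
  simp [smithExponents, List.count_flatten, List.map_ofFn, List.sum_ofFn, List.count_replicate,
    key]

variable {n : ℕ}

theorem card_filter_getD_smithExponents (hν : ∑ j, ν j ≤ n) (j : Fin r) :
    #{i : Fin n | (smithExponents r ν).getD i r = r - 1 - j} = ν j := by
  have := congrArg (Multiset.count (r - 1 - j))
    (List.map_univ_getD (smithExponents r ν) r (n := n) (by rwa [length_smithExponents]))
  rw [Multiset.count_map, Multiset.count_add, Multiset.coe_count, count_smithExponents,
    Multiset.count_replicate, if_neg (by omega), add_zero] at this
  simpa [Finset.card_def, eq_comm] using this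

theorem exists_perm_getD_smithExponents (e : Fin n → ℕ) (he : ∀ i, e i ≤ r) :
    ∃ ν : Fin r → ℕ, ∑ j, ν j ≤ n ∧
      ∃ σ : Equiv.Perm (Fin n), ∀ i, (smithExponents r ν).getD (σ i) r = e i := by
  set E := Finset.univ.val.map e
  set ν : Fin r → ℕ := fun j => E.count (r - 1 - j)
  have hL : (smithExponents r ν : Multiset ℕ) = E.filter (· < r) := by
    ext t
    by_cases ht : t < r
    · rw [Multiset.count_filter_of_pos (p := (· < r)) ht, Multiset.coe_count]
      obtain ⟨j, rfl⟩ : ∃ j : Fin r, r - 1 - j = t := ⟨⟨r - 1 - t, by omega⟩, by simp; omega⟩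
      exact count_smithExponents ν j
    · rw [Multiset.count_filter_of_neg (p := (· < r)) ht, Multiset.coe_count, List.count_eq_zero]
      exact fun h => ht (lt_of_mem_smithExponents ν h)
  have hν : ∑ j, ν j ≤ n := by
    rw [← length_smithExponents, ← Multiset.coe_card, hL]
    exact (Multiset.card_le_card (Multiset.filter_le _ _)).trans (by simp [E])
  refine ⟨ν, hν, Equiv.Perm.exists_comp_eq_of_map_univ_eq
    (f := fun i : Fin n => (smithExponents r ν).getD i r) ?_⟩
  rw [List.map_univ_getD _ _ (by rwa [length_smithExponents]), hL]
  change _ = E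
  conv_rhs => rw [← Multiset.filter_add_not (· < r) E]
  congr 1
  refine (Multiset.eq_replicate.2 ⟨?_, fun b hb => ?_⟩).symm
  · have := congrArg Multiset.card (Multiset.filter_add_not (· < r) E)
    rw [Multiset.card_add, ← hL, Multiset.coe_card, show Multiset.card E = n by simp [E]] at this
    omega
  · obtain ⟨hbE, hbr⟩ := Multiset.mem_filter.1 hb
    obtain ⟨i, -, rfl⟩ := Multiset.mem_map.1 hbE
    exact le_antisymm (he i) (not_lt.1 hbr)

theorem smithDiag_eq_rectDiagonal {R : Type*} [CommRing R] {π : R} (hr : π ^ r = 0) (n : ℕ) :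
    smithDiag π r n ν = Matrix.rectDiagonal fun i => π ^ (smithExponents r ν).getD i r := by
  ext i j
  simp only [smithDiag, Matrix.rectDiagonal, Matrix.of_apply, smithDiagEntries_eq_map]
  rw [← hr, List.getD_map]

end SmithExponents

open Finset in
theorem card_filter_eq_of_sum_min_eq {ι : Type*} [Fintype ι] {r : ℕ} {e e' : ι → ℕ}
    (h : ∀ k, ∑ i, min (k + e i) r = ∑ i, min (k + e' i) r) {t : ℕ} (ht : t < r) :
    #{i | e i = t} = #{i | e' i = t} := by
  classical
  -- the increments of `k ↦ ∑ i, min (k + f i) r` count the `i` with `k + f i < r`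
  have step (f : ι → ℕ) (k : ℕ) :
      ∑ i, min (k + 1 + f i) r = ∑ i, min (k + f i) r + #{i | k + f i < r} := by
    rw [card_filter, ← sum_add_distrib]
    exact sum_congr rfl fun i _ => by split_ifs <;> omega
  have hlt (k : ℕ) : #{i | k + e i < r} = #{i | k + e' i < r} := by
    have := h (k + 1)
    rw [step, step, h k] at this
    omega
  have split (f : ι → ℕ) :
      #{i | r - 1 - t + f i < r} = #{i | f i = t} + #{i | r - t + f i < r} := by
    rw [card_filter, card_filter, card_filter, ← sum_add_distrib]
    exact sum_congr rfl fun i _ => by split_ifs <;> omega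
  have := hlt (r - 1 - t)
  rw [split, split, hlt (r - t)] at this
  omega

section ChainRing

open Matrix AddMonoidHom

variable {R : Type*} [CommRing R] {π : R} {r : ℕ} (hr : π ^ r = 0) (hr' : π ^ (r - 1) ≠ 0)
include hr

include hr' in
theorem pow_eq_zero_iff_le {t : ℕ} : π ^ t = 0 ↔ r ≤ t := by
  refine ⟨fun ht => ?_, fun h => by rw [← Nat.add_sub_cancel' h, pow_add, hr, zero_mul]⟩
  by_contra h
  exact hr' (by rw [← Nat.sub_add_cancel (by omega : t ≤ r - 1), pow_add, ht, mul_zero])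

include hr' in
theorem one_lt_card_ker_mulRight [Finite R] : 1 < Nat.card (mulRight π).ker := by
  refine (AddSubgroup.one_lt_card_iff_ne_bot _).2 fun h => hr' ?_
  have : π ^ (r - 1) ∈ (mulRight π).ker := by
    rw [mem_ker, mulRight_apply, ← pow_succ, pow_eq_zero_iff_le hr hr']
    omega
  simpa [h] using this

variable [IsLocalRing R] (hπ : Ideal.span {π} = IsLocalRing.maximalIdeal R)
include hπ

theorem exists_unit_mul_pow (x : R) : ∃ k ≤ r, ∃ u : Rˣ, x = u * π ^ k := by
  classical
  set k := Nat.findGreatest (π ^ · ∣ x) r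
  obtain ⟨c, hc⟩ : π ^ k ∣ x := Nat.findGreatest_spec (P := (π ^ · ∣ x)) (Nat.zero_le r) (by simp)
  refine ⟨k, Nat.findGreatest_le r, ?_⟩
  by_cases hk : k = r
  · exact ⟨1, by simp [hc, hk, hr]⟩
  have hc : IsUnit c := by
    by_contra hcu
    obtain ⟨c', rfl⟩ := Ideal.mem_span_singleton.1 (hπ ▸ hcu : c ∈ Ideal.span {π})
    refine Nat.findGreatest_is_greatest (lt_add_one k)
      (Nat.lt_of_le_of_ne (Nat.findGreatest_le r) hk) ⟨c', ?_⟩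
    rw [hc, pow_succ, mul_assoc]
  obtain ⟨u, rfl⟩ := hc
  exact ⟨u, by rw [hc, mul_comm]⟩

theorem exists_pivot {m n : Type*} [Finite m] [Finite n] [Nonempty m] [Nonempty n]
    (A : Matrix m n R) :
    ∃ i j, ∃ k ≤ r, Associated (A i j) (π ^ k) ∧ ∀ i' j', A i j ∣ A i' j' := by
  choose k hk u hu using fun p : m × n => exists_unit_mul_pow hr hπ (A p.1 p.2)
  obtain ⟨⟨i, j⟩, hmin⟩ := Finite.exists_min k
  refine ⟨i, j, k (i, j), hk _, hu (i, j) ▸ associated_unit_mul_left _ _ (u _).isUnit,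
    fun i' j' => ?_⟩
  rw [hu (i, j), hu (i', j'), Units.mul_left_dvd]
  exact (pow_dvd_pow π (hmin (i', j'))).mul_left _

theorem exists_equivalent_rectDiagonal_pow :
    ∀ {m n : ℕ} (A : Matrix (Fin m) (Fin n) R),
      ∃ e : Fin m → ℕ, (∀ i, e i ≤ r) ∧ Equivalent A (rectDiagonal fun i => π ^ e i)
  | 0, _, A => ⟨finZeroElim, finZeroElim, .of_eq (Subsingleton.elim _ _)⟩
  | _ + 1, 0, A => ⟨0, fun _ => Nat.zero_le r, .of_eq (Subsingleton.elim _ _)⟩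
  | m + 1, n + 1, A => by
    obtain ⟨i, j, k, hk, hpiv, hdvd⟩ := exists_pivot hr hπ A
    set B := A.submatrix (Equiv.swap 0 i) (Equiv.swap 0 j)
    have hB : B 0 0 = A i j := by simp [B]
    obtain ⟨M, hBM⟩ := equivalent_cornerBlock_of_dvd B (fun _ => hB ▸ hdvd _ _)
      (fun _ => hB ▸ hdvd _ _)
    obtain ⟨e, he, hMe⟩ := exists_equivalent_rectDiagonal_pow M
    refine ⟨Fin.cons k e, Fin.cases hk he, ?_⟩
    rw [← Function.comp_def (π ^ ·), Fin.comp_cons, ← cornerBlock_rectDiagonal]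
    exact (equivalent_submatrix A _ _).symm.trans
      (hBM.trans (Equivalent.cornerBlock (hB ▸ hpiv) hMe))

include hr' in
theorem card_ker_mulRight_pow_succ {t : ℕ} (ht : t < r) :
    Nat.card (mulRight (π ^ (t + 1))).ker =
      Nat.card (mulRight (π ^ t)).ker * Nat.card (mulRight π).ker := by
  set G := (mulRight (π ^ (t + 1))).ker
  set f := (mulRight (π ^ t)).comp G.subtype
  have hker : f.ker = (mulRight (π ^ t)).ker.addSubgroupOf G := (comap_ker _ _).symm
  have hle : (mulRight (π ^ t)).ker ≤ G := fun x hx => by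
    simp_all [G, pow_succ, ← mul_assoc]
  have hrange : f.range = (mulRight π).ker := by
    ext y
    simp only [f, G, mem_range, mem_ker, coe_comp, Function.comp_apply, AddSubgroup.coe_subtype,
      mulRight_apply, Subtype.exists, exists_prop]
    refine ⟨fun ⟨x, hx, hxy⟩ => by rw [← hxy, mul_assoc, ← pow_succ, hx], fun hy => ?_⟩
    obtain ⟨j, -, u, rfl⟩ := exists_unit_mul_pow hr hπ y
    have hj : r ≤ j + 1 := by
      rwa [mul_assoc, ← pow_succ, Units.mul_right_eq_zero, pow_eq_zero_iff_le hr hr'] at hy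
    refine ⟨u * π ^ (j - t), ?_, ?_⟩
    · rw [mul_assoc, ← pow_add, (pow_eq_zero_iff_le hr hr').2 (by omega), mul_zero]
    · rw [mul_assoc, ← pow_add, Nat.sub_add_cancel (by omega)]
  rw [← AddSubgroup.card_mul_index f.ker, AddSubgroup.index_ker, hrange, hker,
    Nat.card_congr (AddSubgroup.addSubgroupOfEquivOfLe hle).toEquiv]

include hr' in
theorem card_ker_mulRight_pow (t : ℕ) :
    Nat.card (mulRight (π ^ t)).ker = Nat.card (mulRight π).ker ^ min t r := by
  have hle : ∀ t ≤ r, Nat.card (mulRight (π ^ t)).ker = Nat.card (mulRight π).ker ^ t := by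
    intro t ht
    induction t with
    | zero => rw [pow_zero, pow_zero, ← AddSubgroup.eq_bot_iff_card]; ext; simp
    | succ t ih => rw [card_ker_mulRight_pow_succ hr hr' hπ ht, ih (by omega), pow_succ]
  rcases le_total t r with h | h
  · rw [min_eq_left h, hle t h]
  · rw [min_eq_right h, ← hle r le_rfl, (pow_eq_zero_iff_le hr hr').2 h, hr]

include hr' in
theorem sum_min_eq_of_equivalent_rectDiagonal_pow [Finite R] {m n : ℕ}
    (hmn : m ≤ n) {e e' : Fin m → ℕ}
    (h : Equivalent (rectDiagonal (π ^ e ·) : Matrix (Fin m) (Fin n) R) (rectDiagonal (π ^ e' ·)))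
    (k : ℕ) : ∑ i, min (k + e i) r = ∑ i, min (k + e' i) r := by
  have hcard (e : Fin m → ℕ) :
      Nat.card {w : Fin m → R //
        w ᵥ* (π ^ k • rectDiagonal (π ^ e ·) : Matrix (Fin m) (Fin n) R) = 0} =
          Nat.card (mulRight π).ker ^ ∑ i, min (k + e i) r := by
    simp only [smul_rectDiagonal, vecMul_rectDiagonal_eq_zero_iff hmn, Pi.smul_apply, smul_eq_mul,
      ← pow_add]
    rw [Nat.card_congr (Equiv.subtypePiEquivPi (p := fun i (x : R) => x * π ^ (k + e i) = 0)),
      Nat.card_pi, ← Finset.prod_pow_eq_pow_sum]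
    exact Finset.prod_congr rfl fun i _ => card_ker_mulRight_pow hr hr' hπ _
  refine Nat.pow_right_injective (one_lt_card_ker_mulRight hr hr') ?_
  simp only [← hcard]
  exact (h.smul _).card_vecMul_eq_zero

theorem exists_equivalent_smithDiag {n : ℕ} (A : Matrix (Fin n) (Fin (2 * n)) R) :
    ∃ ν : Fin r → ℕ, ∑ j, ν j ≤ n ∧ Equivalent A (smithDiag π r n ν) := by
  obtain ⟨e, he, hA⟩ := exists_equivalent_rectDiagonal_pow hr hπ A
  obtain ⟨ν, hν, σ, hσ⟩ := exists_perm_getD_smithExponents e he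
  refine ⟨ν, hν, hA.trans ?_⟩
  have hsorted : (fun i => π ^ e i) = (fun i : Fin n => π ^ (smithExponents r ν).getD i r) ∘ σ :=
    funext fun i => by rw [Function.comp_apply, hσ]
  rw [smithDiag_eq_rectDiagonal ν hr, hsorted]
  exact rectDiagonal_comp_perm_equivalent (by omega) _ σ

include hr' in
theorem eq_of_equivalent_smithDiag [Finite R] {n : ℕ} {ν ν' : Fin r → ℕ} (hν : ∑ j, ν j ≤ n)
    (hν' : ∑ j, ν' j ≤ n) (h : Equivalent (smithDiag π r n ν) (smithDiag π r n ν')) : ν = ν' := by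
  rw [smithDiag_eq_rectDiagonal ν hr, smithDiag_eq_rectDiagonal ν' hr] at h
  funext j
  rw [← card_filter_getD_smithExponents ν hν j, ← card_filter_getD_smithExponents ν' hν' j]
  refine card_filter_eq_of_sum_min_eq
    (sum_min_eq_of_equivalent_rectDiagonal_pow hr hr' hπ (by omega) h) ?_
  omega

end ChainRing

theorem existsUnique_smith_normal_form_finite_chain_ring_general
    (R : Type*) [CommRing R] [Fintype R] [IsLocalRing R]
    (π : R) (hπ : Ideal.span {π} = IsLocalRing.maximalIdeal R)
    (r : ℕ) (hr : π ^ r = 0) (hr' : π ^ (r - 1) ≠ 0)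
    (n : ℕ) (A : Matrix (Fin n) (Fin (2 * n)) R) :
    ∃! ν : Fin r → ℕ, (∑ i, ν i ≤ n) ∧
      ∃ (U : (Matrix (Fin n) (Fin n) R)ˣ) (V : (Matrix (Fin (2 * n)) (Fin (2 * n)) R)ˣ),
        A = U.val * smithDiag π r n ν * V.val := by
  obtain ⟨ν, hν, hA⟩ := exists_equivalent_smithDiag hr hπ A
  exact ⟨ν, ⟨hν, hA⟩, fun ν' ⟨hν', hA'⟩ =>
    eq_of_equivalent_smithDiag hr hr' hπ hν' hν (Matrix.Equivalent.symm hA' |>.trans hA)⟩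

/-- Over a finite chain ring, every `n × 2n` matrix `A` is equivalent to a unique
normalized Smith normal form `D_{(n_1,…,n_r)}` with `n_1 + ⋯ + n_r ≤ n`. -/
theorem existsUnique_smith_normal_form_finite_chain_ring
    (R : Type*) [CommRing R] [Fintype R] [IsLocalRing R] [IsPrincipalIdealRing R]
    (π : R) (hπ : Ideal.span {π} = IsLocalRing.maximalIdeal R)
    (r : ℕ) (hrpos : 0 < r) (hr : π ^ r = 0) (hr' : π ^ (r - 1) ≠ 0)
    (n : ℕ) (A : Matrix (Fin n) (Fin (2 * n)) R) :
    ∃! ν : Fin r → ℕ, (∑ i, ν i ≤ n) ∧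
      ∃ (U : (Matrix (Fin n) (Fin n) R)ˣ) (V : (Matrix (Fin (2 * n)) (Fin (2 * n)) R)ˣ),
        A = U.val * smithDiag π r n ν * V.val :=
  existsUnique_smith_normal_form_finite_chain_ring_general R π hπ r hr hr' n A
end

section
/- Let R be a finite chain ring with residue field of size q and |R| = q^r. For every n there exists C(n) > 0 such that for all subsets A, B, C of M_n(R), |A + BC| ≥ C(n) · min(q^{rn^2}, |A||B||C| / q^{2rn^2 − (n+1)/2}), where A + BC = {a + bc : a ∈ A, b ∈ B, c ∈ C}. -/
/-!
Let `S = |A + BC|` and let `E` count the pairs of triples with `a + bc = a' + b'c'`, so that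
`(|A||B||C|)² ≤ S E` by Cauchy–Schwarz. Expanding `E` in additive characters of `M = M_n(R)`,
the trivial character contributes `(|A||B||C|)² / |M|`. For a nontrivial `χ`, the sum
`∑_{b ∈ B, c ∈ C} χ(bc)` has square at most `|B||C||M||K_χ|`, where `K_χ = {u | ∀ b, χ(bu) = 1}`
is a proper left ideal of `M`; over a local ring such an ideal has index at least `q^n`.
Parseval for `A` then gives `|M| E ≤ (|A||B||C|)² + |A||B||C||M|³ / q^n`, and the two
inequalities together give `2 S ≥ min(|M|, |A||B||C| q^n / |M|²)`.
-/

open Finset ComplexConjugate IsLocalRing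

def collisionCount {ι β : Type*} [DecidableEq β] (s : Finset ι) (f : ι → β) : ℕ :=
  #{p ∈ s ×ˢ s | f p.1 = f p.2}

section Collisions

variable {ι β : Type*} [DecidableEq β]

lemma collisionCount_id [DecidableEq ι] (s : Finset ι) : collisionCount s id = #s := by
  rw [collisionCount, ← diag_card s, diag_eq_filter]
  rfl

lemma collisionCount_eq_sum_sq [DecidableEq ι] (s : Finset ι) (f : ι → β) :
    collisionCount s f = ∑ b ∈ s.image f, #{i ∈ s | f i = b} ^ 2 := by
  rw [collisionCount, card_eq_sum_card_fiberwise (f := fun p => f p.1) (t := s.image f)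
    fun p hp => mem_image_of_mem f (mem_product.1 (mem_filter.1 hp).1).1]
  refine sum_congr rfl fun b _ => ?_
  rw [sq, ← card_product]
  congr 1
  ext ⟨i, j⟩
  simp only [mem_filter, mem_product]
  constructor
  · rintro ⟨⟨⟨hi, hj⟩, hij⟩, rfl⟩
    exact ⟨⟨hi, rfl⟩, hj, hij.symm⟩
  · rintro ⟨⟨hi, rfl⟩, hj, hji⟩
    exact ⟨⟨⟨hi, hj⟩, hji.symm⟩, rfl⟩

lemma sq_card_le_card_image_mul_collisionCount [DecidableEq ι] (s : Finset ι) (f : ι → β) :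
    #s ^ 2 ≤ #(s.image f) * collisionCount s f := by
  rw [card_eq_sum_card_image f s, collisionCount_eq_sum_sq]
  exact sq_sum_le_card_mul_sum_sq

lemma collisionCount_le_card_mul_card {G : Type*} [AddGroup G] [Finite G]
    (K : AddSubgroup G) {f : G → β} (hf : ∀ x y, f x = f y → x - y ∈ K) (s : Finset G) :
    collisionCount s f ≤ #s * Nat.card K := by
  classical
  have := Fintype.ofFinite G
  rw [← SetLike.coe_sort_coe, Nat.card_eq_card_toFinset, ← card_product]
  refine card_le_card_of_injOn (fun p => (p.1, p.1 - p.2)) (fun p hp => ?_) fun p _ p' _ h => ?_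
  · simp only [coe_filter, Set.mem_ofPred_eq, mem_product] at hp
    simpa using ⟨hp.1.1, hf _ _ hp.2⟩
  · simp only [Prod.mk.injEq] at h
    exact Prod.ext h.1 (by simpa [h.1] using h.2)

end Collisions

section Fourier

variable {G ι : Type*} [AddCommGroup G] [Fintype G]

lemma ofReal_norm_sq_sum (s : Finset ι) (z : ι → ℂ) :
    (‖∑ i ∈ s, z i‖ : ℂ) ^ 2 = ∑ p ∈ s ×ˢ s, z p.1 * conj (z p.2) := by
  rw [← Complex.mul_conj', map_sum, sum_mul_sum, sum_product]

lemma sum_addChar_norm_sq_sum_eq [DecidableEq G] (s : Finset ι) (f : ι → G) :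
    ∑ χ : AddChar G ℂ, ‖∑ i ∈ s, χ (f i)‖ ^ 2 = Fintype.card G * collisionCount s f := by
  apply Complex.ofReal_injective
  push_cast [ofReal_norm_sq_sum]
  rw [sum_comm]
  simp_rw [← AddChar.map_neg_eq_conj, ← AddChar.map_add_eq_mul, ← sub_eq_add_neg,
    AddChar.sum_apply_eq_ite, sub_eq_zero, sum_ite, sum_const_zero, sum_const, collisionCount]
  simp [mul_comm]

lemma sum_norm_sq_sum_addChar_apply_eq (s : Finset ι) (ψ : ι → AddChar G ℂ) :
    ∑ x : G, ‖∑ i ∈ s, ψ i x‖ ^ 2 = Fintype.card G * collisionCount s ψ := by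
  classical
  apply Complex.ofReal_injective
  push_cast [ofReal_norm_sq_sum]
  rw [sum_comm]
  simp_rw [← AddChar.map_neg_eq_conj, ← AddChar.sub_apply, AddChar.sum_eq_ite, sub_eq_zero,
    sum_ite, sum_const_zero, sum_const, collisionCount]
  simp [mul_comm]

lemma card_mul_collisionCount_add_le [DecidableEq G] (A : Finset G) (T : Finset ι) (g : ι → G)
    {β : ℝ} (hβ₀ : 0 ≤ β) (hβ : ∀ χ : AddChar G ℂ, χ ≠ 0 → ‖∑ t ∈ T, χ (g t)‖ ^ 2 ≤ β) :
    Fintype.card G * (collisionCount (A ×ˢ T) fun p => p.1 + g p.2 : ℝ) ≤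
      (#A * #T) ^ 2 + Fintype.card G * #A * β := by
  classical
  have hsplit (χ : AddChar G ℂ) :
      ∑ p ∈ A ×ˢ T, χ (p.1 + g p.2) = (∑ a ∈ A, χ a) * ∑ t ∈ T, χ (g t) := by
    simp_rw [sum_product, sum_mul_sum, AddChar.map_add_eq_mul]
  rw [← sum_addChar_norm_sq_sum_eq, ← add_sum_erase _ _ (mem_univ 0)]
  gcongr
  · simp [card_product]
  calc ∑ χ ∈ univ.erase (0 : AddChar G ℂ), ‖∑ p ∈ A ×ˢ T, χ (p.1 + g p.2)‖ ^ 2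
      ≤ ∑ χ ∈ univ.erase (0 : AddChar G ℂ), ‖∑ a ∈ A, χ a‖ ^ 2 * β := by
        refine sum_le_sum fun χ hχ => ?_
        rw [hsplit, norm_mul, mul_pow]
        exact mul_le_mul_of_nonneg_left (hβ χ (ne_of_mem_erase hχ)) (by positivity)
    _ ≤ ∑ χ : AddChar G ℂ, ‖∑ a ∈ A, χ a‖ ^ 2 * β :=
        sum_le_sum_of_subset_of_nonneg (erase_subset _ _) fun _ _ _ => mul_nonneg (sq_nonneg _) hβ₀
    _ = Fintype.card G * #A * β := by
        rw [← sum_mul, ← collisionCount_id, ← sum_addChar_norm_sq_sum_eq]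
        rfl

end Fourier

namespace AddChar

variable {S : Type*} [Ring S]

def kerMulRight (χ : AddChar S ℂ) : Ideal S where
  carrier := {u | ∀ b, χ (b * u) = 1}
  add_mem' {u v} hu hv b := by rw [mul_add, map_add_eq_mul, hu b, hv b, one_mul]
  zero_mem' b := by rw [mul_zero, map_zero_eq_one]
  smul_mem' s u hu b := by rw [smul_eq_mul, ← mul_assoc]; exact hu (b * s)

lemma mem_kerMulRight {χ : AddChar S ℂ} {u : S} : u ∈ χ.kerMulRight ↔ ∀ b, χ (b * u) = 1 :=
  Iff.rfl

lemma kerMulRight_ne_top {χ : AddChar S ℂ} (hχ : χ ≠ 0) : χ.kerMulRight ≠ ⊤ := by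
  rw [Ne, Ideal.eq_top_iff_one, mem_kerMulRight]
  simpa [eq_zero_iff] using hχ

lemma norm_sq_sum_mul_le [Fintype S] (χ : AddChar S ℂ) (B C : Finset S) :
    ‖∑ p ∈ B ×ˢ C, χ (p.1 * p.2)‖ ^ 2 ≤
      #B * #C * Fintype.card S * Nat.card χ.kerMulRight := by
  classical
  let ψ (c : S) : AddChar S ℂ := χ.compAddMonoidHom (AddMonoidHom.mulRight c)
  have hψ (c c' : S) (h : ψ c = ψ c') : c - c' ∈ χ.kerMulRight.toAddSubgroup := fun b => by
    have := DFunLike.congr_fun h b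
    simp only [ψ, compAddMonoidHom_apply, AddMonoidHom.coe_mulRight] at this
    rw [mul_sub, sub_eq_add_neg, map_add_eq_mul, this, ← map_add_eq_mul, add_neg_cancel,
      map_zero_eq_one]
  calc ‖∑ p ∈ B ×ˢ C, χ (p.1 * p.2)‖ ^ 2 = ‖∑ b ∈ B, ∑ c ∈ C, ψ c b‖ ^ 2 := by
        rw [sum_product]; rfl
    _ ≤ #B * ∑ b ∈ B, ‖∑ c ∈ C, ψ c b‖ ^ 2 :=
        (pow_le_pow_left₀ (norm_nonneg _) (norm_sum_le _ _) 2).trans sq_sum_le_card_mul_sum_sq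
    _ ≤ #B * ∑ b, ‖∑ c ∈ C, ψ c b‖ ^ 2 := by
        gcongr
        exact subset_univ B
    _ = #B * (Fintype.card S * collisionCount C ψ) := by
        rw [sum_norm_sq_sum_addChar_apply_eq]
    _ ≤ #B * (Fintype.card S * (#C * Nat.card χ.kerMulRight)) := by
        gcongr
        exact_mod_cast collisionCount_le_card_mul_card _ hψ C
    _ = #B * #C * Fintype.card S * Nat.card χ.kerMulRight := by ring

end AddChar

lemma min_le_two_mul_of_sq_le_mul {u S E N Q : ℝ} (hu : 0 ≤ u) (hS : 0 ≤ S) (hN : 0 < N)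
    (hQ : 0 < Q) (hCS : u ^ 2 ≤ S * E) (hE : N * E ≤ u ^ 2 + u * N ^ 3 / Q) :
    min N (u * Q / N ^ 2) ≤ 2 * S := by
  rcases hu.eq_or_lt with rfl | hu
  · exact (min_le_right _ _).trans (by rw [zero_mul, zero_div]; linarith)
  have hE' : N * E * Q ≤ u ^ 2 * Q + u * N ^ 3 := by
    rwa [← le_div_iff₀ hQ, add_div, mul_div_cancel_right₀ _ hQ.ne']
  have hmain : u * N * Q ≤ S * (u * Q + N ^ 3) := by
    refine le_of_mul_le_mul_left ?_ hu
    calc u * (u * N * Q) = u ^ 2 * (N * Q) := by ring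
      _ ≤ S * E * (N * Q) := by gcongr
      _ = S * (N * E * Q) := by ring
      _ ≤ S * (u ^ 2 * Q + u * N ^ 3) := by gcongr
      _ = u * (S * (u * Q + N ^ 3)) := by ring
  rcases le_total (u * Q) (N ^ 3) with h | h
  · refine (min_le_right _ _).trans ?_
    rw [div_le_iff₀ (by positivity)]
    refine le_of_mul_le_mul_right ?_ hN
    nlinarith
  · refine (min_le_left _ _).trans ?_
    refine le_of_mul_le_mul_right ?_ (mul_pos hu hQ)
    nlinarith

namespace Matrix

variable {α : Type*} {n : ℕ}

lemma exists_single_mul_notMem_of_ne_top [Semiring α] {K : Ideal (Matrix (Fin n) (Fin n) α)}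
    (hK : K ≠ ⊤) : ∃ i x, single i i (1 : α) * x ∉ K := by
  obtain ⟨x, hx⟩ : ∃ x, x ∉ K := by
    by_contra! h
    exact hK (Submodule.eq_top_iff'.2 h)
  by_contra! h
  refine hx ?_
  rw [← Matrix.one_mul x, ← sum_single_one, Matrix.sum_mul]
  exact K.sum_mem fun i _ => h i x

lemma single_mul_sum_smul_single_mul [CommSemiring α] (i j : Fin n) (v : Fin n → α)
    (x : Matrix (Fin n) (Fin n) α) :
    single i j 1 * ∑ l, v l • (single l i 1 * x) = v j • (single i i 1 * x) := by
  rw [Matrix.mul_sum, sum_eq_single j (fun l _ hl => by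
    rw [Matrix.mul_smul, ← Matrix.mul_assoc, single_mul_single_of_ne _ _ _ _ hl.symm,
      Matrix.zero_mul, smul_zero]) (by simp),
    Matrix.mul_smul, ← Matrix.mul_assoc, single_mul_single_same, one_mul]

end Matrix

section MatrixRing

variable {R : Type*} [CommRing R] [IsLocalRing R] {n : ℕ}

instance [Finite R] : Finite (ResidueField R) :=
  Finite.of_surjective _ Ideal.Quotient.mk_surjective

/-- Some `E_ii x` lies outside `K`, and the map `v ↦ (∑ l, v l • E_li) x` into `M_n(R) ⧸ K` has
kernel inside `𝔪ⁿ`, because left multiplication by `E_ij` turns its value into `v j • E_ii x`. -/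
lemma card_residueField_pow_le_card_quotient [Finite R] (K : Ideal (Matrix (Fin n) (Fin n) R))
    (hK : K ≠ ⊤) :
    Nat.card (ResidueField R) ^ n ≤ Nat.card (Matrix (Fin n) (Fin n) R ⧸ K) := by
  classical
  obtain ⟨i, x, hi⟩ := Matrix.exists_single_mul_notMem_of_ne_top hK
  let Φ : (Fin n → R) →ₗ[R] Matrix (Fin n) (Fin n) R ⧸ K :=
    K.mkQ.restrictScalars R ∘ₗ Fintype.linearCombination R fun l => Matrix.single l i 1 * x
  have hker : LinearMap.ker Φ ≤ Submodule.pi Set.univ fun _ => maximalIdeal R := by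
    intro v hv
    simp only [Submodule.mem_pi, Set.mem_univ, true_implies]
    intro j
    by_contra hj
    obtain ⟨u, hu⟩ : IsUnit (v j) := not_not.1 ((mem_maximalIdeal _).not.1 hj)
    refine hi ?_
    have hmem : Matrix.single i j 1 * ∑ l, v l • (Matrix.single l i 1 * x) ∈ K :=
      K.mul_mem_left _ ((Submodule.Quotient.mk_eq_zero K).1 hv)
    rw [Matrix.single_mul_sum_smul_single_mul, ← hu] at hmem
    simpa [smul_smul] using Submodule.smul_of_tower_mem K (↑u⁻¹ : R) hmem
  have : Finite ((Fin n → R) ⧸ LinearMap.ker Φ) := .of_surjective _ (Submodule.mkQ_surjective _)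
  have : Finite (Matrix (Fin n) (Fin n) R ⧸ K) := .of_surjective _ (Submodule.mkQ_surjective _)
  calc Nat.card (ResidueField R) ^ n
      = Nat.card ((Fin n → R) ⧸ Submodule.pi Set.univ fun _ => maximalIdeal R) := by
        rw [Nat.card_congr (Submodule.quotientPi _).toEquiv, Nat.card_pi, prod_const, card_univ,
          Fintype.card_fin]
        rfl
    _ ≤ Nat.card ((Fin n → R) ⧸ LinearMap.ker Φ) :=
        Nat.card_le_card_of_surjective _ (Submodule.factor_surjective hker)
    _ = Nat.card (LinearMap.range Φ) := Nat.card_congr Φ.quotKerEquivRange.toEquiv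
    _ ≤ Nat.card (Matrix (Fin n) (Fin n) R ⧸ K) :=
        Nat.card_le_card_of_injective _ Subtype.val_injective

variable [Fintype R]

lemma AddChar.norm_sq_sum_mul_mul_card_residueField_pow_le
    {χ : AddChar (Matrix (Fin n) (Fin n) R) ℂ} (hχ : χ ≠ 0)
    (B C : Finset (Matrix (Fin n) (Fin n) R)) :
    ‖∑ p ∈ B ×ˢ C, χ (p.1 * p.2)‖ ^ 2 * Nat.card (ResidueField R) ^ n ≤
      #B * #C * Fintype.card (Matrix (Fin n) (Fin n) R) ^ 2 := by
  set K := χ.kerMulRight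
  have hK : Nat.card K * Nat.card (ResidueField R) ^ n ≤
      Fintype.card (Matrix (Fin n) (Fin n) R) := by
    rw [← Nat.card_eq_fintype_card, Submodule.card_eq_card_quotient_mul_card K]
    exact Nat.mul_le_mul_left _ (card_residueField_pow_le_card_quotient K
      (AddChar.kerMulRight_ne_top hχ))
  calc ‖∑ p ∈ B ×ˢ C, χ (p.1 * p.2)‖ ^ 2 * Nat.card (ResidueField R) ^ n
      ≤ #B * #C * Fintype.card (Matrix (Fin n) (Fin n) R) * Nat.card K *
          Nat.card (ResidueField R) ^ n := by
        gcongr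
        exact χ.norm_sq_sum_mul_le B C
    _ ≤ #B * #C * Fintype.card (Matrix (Fin n) (Fin n) R) *
          Fintype.card (Matrix (Fin n) (Fin n) R) := by
        rw [mul_assoc _ (Nat.card K : ℝ)]
        gcongr
        exact_mod_cast hK
    _ = #B * #C * Fintype.card (Matrix (Fin n) (Fin n) R) ^ 2 := by ring

theorem min_le_two_mul_card_image_add_mul [DecidableEq R]
    (A B C : Finset (Matrix (Fin n) (Fin n) R)) :
    min (Fintype.card (Matrix (Fin n) (Fin n) R) : ℝ)
        (#A * #B * #C * Nat.card (ResidueField R) ^ n /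
          Fintype.card (Matrix (Fin n) (Fin n) R) ^ 2) ≤
      2 * #((A ×ˢ B ×ˢ C).image fun p => p.1 + p.2.1 * p.2.2) := by
  set N : ℝ := (Fintype.card (Matrix (Fin n) (Fin n) R) : ℝ)
  set Q : ℝ := (Nat.card (ResidueField R) : ℝ) ^ n
  set E := collisionCount (A ×ˢ B ×ˢ C) fun p => p.1 + p.2.1 * p.2.2
  have hQ : 0 < Q := pow_pos (Nat.cast_pos.2 Nat.card_pos) n
  have hCS : ((#A : ℝ) * #B * #C) ^ 2 ≤
      #((A ×ˢ B ×ˢ C).image fun p => p.1 + p.2.1 * p.2.2) * (E : ℝ) := by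
    have := sq_card_le_card_image_mul_collisionCount (A ×ˢ B ×ˢ C) fun p => p.1 + p.2.1 * p.2.2
    rw [card_product, card_product, ← mul_assoc] at this
    exact_mod_cast this
  have hE : N * E ≤ (#A * #B * #C) ^ 2 + #A * #B * #C * N ^ 3 / Q := by
    calc N * E ≤ (#A * #(B ×ˢ C)) ^ 2 + N * #A * (#B * #C * N ^ 2 / Q) :=
          card_mul_collisionCount_add_le A (B ×ˢ C) (fun p => p.1 * p.2) (by positivity)
            fun χ hχ => (le_div_iff₀ hQ).2 (χ.norm_sq_sum_mul_mul_card_residueField_pow_le hχ B C)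
      _ = (#A * #B * #C) ^ 2 + #A * #B * #C * N ^ 3 / Q := by
          rw [card_product]
          push_cast
          ring
  exact min_le_two_mul_of_sq_le_mul (by positivity) (by positivity) (by positivity) hQ hCS hE

end MatrixRing

lemma min_div_rpow_le_min_mul_div_sq {q : ℝ} (hq : 1 ≤ q) (r n m : ℕ) :
    min (q ^ (r * n ^ 2)) (m / q ^ (2 * (r : ℝ) * (n : ℝ) ^ 2 - ((n : ℝ) + 1) / 2)) ≤
      min (q ^ (r * n ^ 2)) (m * q ^ n / (q ^ (r * n ^ 2)) ^ 2) := by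
  have hq0 : 0 < q := by linarith
  -- For `n = 0` the exponents compare the wrong way, but then both sides are `0` or `1`.
  rcases n.eq_zero_or_pos with rfl | hn
  · rcases m.eq_zero_or_pos with rfl | hm
    · simp
    · simp [Nat.one_le_iff_ne_zero.2 hm.ne']
  refine min_le_min le_rfl ?_
  have hsq : (q ^ (r * n ^ 2)) ^ 2 / q ^ n = q ^ (2 * (r : ℝ) * (n : ℝ) ^ 2 - n) := by
    rw [Real.rpow_sub hq0, ← pow_mul, ← Real.rpow_natCast, ← Real.rpow_natCast q n]
    push_cast
    ring_nf
  rw [← div_div_eq_mul_div, hsq]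
  gcongr
  have : (1 : ℝ) ≤ n := Nat.one_le_cast.2 hn
  linarith

/-- For every `n` there is `c = C(n) > 0` such that for all subsets `A, B, C` of
`M_n(R)` over a finite chain ring `R` (residue field of size `q`, `|R| = q^r`),
`|A + BC| ≥ C(n) · min(q^{rn²}, |A||B||C|/q^{2rn²−(n+1)/2})`. -/
theorem expander_x_add_yz_finite_chain_ring (n : ℕ) :
    ∃ c : ℝ, 0 < c ∧
      ∀ (R : Type) [CommRing R] [Fintype R] [IsLocalRing R] [IsPrincipalIdealRing R]
        [DecidableEq R] (q r : ℕ),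
        q = Nat.card (IsLocalRing.ResidueField R) → Nat.card R = q ^ r →
        ∀ A B C : Finset (Matrix (Fin n) (Fin n) R),
          ((((A ×ˢ B ×ˢ C).image fun p => p.1 + p.2.1 * p.2.2).card : ℝ))
            ≥ c * min ((q : ℝ) ^ (r * n ^ 2))
                ((A.card * B.card * C.card : ℝ)
                  / (q : ℝ) ^ (2 * (r : ℝ) * (n : ℝ) ^ 2 - ((n : ℝ) + 1) / 2)) := by
  refine ⟨1 / 2, by norm_num, fun R _ _ _ _ _ q r hq hr A B C => ?_⟩
  have hq₁ : 1 ≤ (q : ℝ) := by exact_mod_cast hq ▸ Nat.card_pos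
  have hqn : (q : ℝ) ^ n = Nat.card (ResidueField R) ^ n := by rw [hq]
  have hN : (Fintype.card (Matrix (Fin n) (Fin n) R) : ℝ) = (q : ℝ) ^ (r * n ^ 2) := by
    rw [← Nat.card_eq_fintype_card, Matrix, Nat.card_fun, Nat.card_fun, hr, Nat.card_fin]
    push_cast
    ring
  have hcount := min_le_two_mul_card_image_add_mul A B C
  have hexp := min_div_rpow_le_min_mul_div_sq hq₁ r n (#A * #B * #C)
  rw [hN, ← hqn] at hcount
  push_cast at hexp
  linarith
end
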